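/- Cayley–Hamilton estimate used in Gordon's lemma: if B is a 2×2 real matrix with det B = 1 and v is a unit vector in ℝ², then max{‖B v‖, ‖B^{−1} v‖, ‖B² v‖} ≥ 1/2. -/
import Mathlib

open Matrix

noncomputable def vnorm13 (w : Fin 2 → ℝ) : ℝ := Real.sqrt (w 0 ^ 2 + w 1 ^ 2)

lemma vnorm13_eq (w : Fin 2 → ℝ) :
    vnorm13 w = ‖(EuclideanSpace.equiv (Fin 2) ℝ).symm w‖ := by
  simp [vnorm13, EuclideanSpace.norm_eq, Fin.sum_univ_two, sq_abs]

lemma vnorm13_nonneg (x : Fin 2 → ℝ) : 0 ≤ vnorm13 x := Real.sqrt_nonneg _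

lemma vnorm13_add_le (x y : Fin 2 → ℝ) :
    vnorm13 (x + y) ≤ vnorm13 x + vnorm13 y := by
  simp only [vnorm13_eq, map_add]
  exact norm_add_le _ _

lemma vnorm13_smul (c : ℝ) (x : Fin 2 → ℝ) :
    vnorm13 (c • x) = |c| * vnorm13 x := by
  simp only [vnorm13_eq, _root_.map_smul]
  rw [norm_smul]; simp

/-- If `B` is a `2×2` real matrix with `det B = 1` and `v` is a unit vector in `ℝ²`,
then `max {‖B v‖, ‖B⁻¹ v‖, ‖B² v‖} ≥ 1/2`. -/
theorem stmt13 (B : Matrix (Fin 2) (Fin 2) ℝ) (hB : B.det = 1)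
    (v : Fin 2 → ℝ) (hv : vnorm13 v = 1) :
    max (max (vnorm13 (B.mulVec v)) (vnorm13 (B⁻¹.mulVec v)))
      (vnorm13 ((B ^ 2).mulVec v)) ≥ 1/2 := by
  by_contra h
  push_neg at h
  simp only [max_lt_iff] at h
  obtain ⟨⟨h1, h2⟩, h3⟩ := h
  set t : ℝ := B 0 0 + B 1 1 with ht
  have hdet : B 0 0 * B 1 1 - B 0 1 * B 1 0 = 1 := by
    rw [← Matrix.det_fin_two] at *; exact hB
  have hinv : B⁻¹ = B.adjugate := by
    rw [Matrix.inv_def, hB]; simp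
  -- identity 1 : B² v = t • (B v) - v
  have e1 : (B ^ 2).mulVec v = t • (B.mulVec v) - v := by
    funext i
    fin_cases i
    · simp [pow_two, Matrix.mulVec, Matrix.mul_apply, Fin.sum_univ_two,
        dotProduct]
      linear_combination (-(v 0)) * hdet
    · simp [pow_two, Matrix.mulVec, Matrix.mul_apply, Fin.sum_univ_two,
        dotProduct]
      linear_combination (-(v 1)) * hdet
  -- identity 2 : B⁻¹ v = t • v - B v
  have e2 : B⁻¹.mulVec v = t • v - B.mulVec v := by
    rw [hinv, Matrix.adjugate_fin_two]
    funext i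
    fin_cases i <;>
      simp [Matrix.mulVec, Fin.sum_univ_two, dotProduct] <;> ring
  set a := vnorm13 (B.mulVec v)
  have ha0 : 0 ≤ a := vnorm13_nonneg _
  have ht0 : (0:ℝ) ≤ |t| := abs_nonneg _
  -- 1 ≤ |t| a + c
  have key1 : 1 ≤ |t| * a + vnorm13 ((B ^ 2).mulVec v) := by
    have : v = t • (B.mulVec v) + (-(B ^ 2).mulVec v) := by
      rw [e1]; abel
    calc (1:ℝ) = vnorm13 v := hv.symm
      _ = vnorm13 (t • (B.mulVec v) + (-(B ^ 2).mulVec v)) := by rw [← this]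
      _ ≤ vnorm13 (t • (B.mulVec v)) + vnorm13 (-(B ^ 2).mulVec v) :=
          vnorm13_add_le _ _
      _ = |t| * a + vnorm13 ((B ^ 2).mulVec v) := by
          rw [vnorm13_smul]
          congr 1
          rw [show -(B ^ 2).mulVec v = (-1 : ℝ) • (B ^ 2).mulVec v by simp,
            vnorm13_smul]; simp
  -- |t| ≤ b + a
  have key2 : |t| ≤ vnorm13 (B⁻¹.mulVec v) + a := by
    have : t • v = B⁻¹.mulVec v + B.mulVec v := by rw [e2]; abel
    calc |t| = |t| * vnorm13 v := by rw [hv, mul_one]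
      _ = vnorm13 (t • v) := (vnorm13_smul _ _).symm
      _ = vnorm13 (B⁻¹.mulVec v + B.mulVec v) := by rw [this]
      _ ≤ vnorm13 (B⁻¹.mulVec v) + a := vnorm13_add_le _ _
  nlinarith [key1, key2, h1, h2, h3, ha0, ht0]
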